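/- arXiv:2205.13466 — 2 statements merged into one kernel-verified Lean document; each statement's English description precedes it below -/
import Mathlib

section
/- Let Σ = X(S¹) be an embedded, closed, smooth plane curve and suppose the function (p,q) ↦ d(p,q)/ψ(p,q) attains a local minimum at a pair (p,q) with p ≠ q and l(p,q) ≤ L/2. Then the second-derivative conditions yield ⟨w, κ⃗_q − κ⃗_p⟩ ≥ −4π² d(p,q)/L², which, by the definition of ψ, equals −(4π d/(ψ L)) · sin(π l/L) at (p,q). -/
open Real Set MeasureTheory

noncomputable section

/-- The Euclidean plane. -/
abbrev E2 : Type := EuclideanSpace ℝ (Fin 2)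

/-- Rotation by minus 90 degrees: `(a, b) ↦ (b, -a)`. -/
def rot90 (u : E2) : E2 := WithLp.toLp 2 ![u 1, -u 0]

/-- Length element `v(p) = ‖∂X/∂p‖`. -/
def lenElem (X : ℝ → E2) (p : ℝ) : ℝ := ‖deriv X p‖

/-- Unit tangent vector `τ = v⁻¹ ∂X/∂p`. -/
def tvec (X : ℝ → E2) (p : ℝ) : E2 := (lenElem X p)⁻¹ • deriv X p

/-- Outward unit normal `ν = (τ₂, -τ₁)`. -/
def nvec (X : ℝ → E2) (p : ℝ) : E2 := rot90 (tvec X p)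

/-- Curvature `κ = -⟨∂τ/∂s, ν⟩`, where `∂/∂s = v⁻¹ ∂/∂p` is the arc-length derivative. -/
def curv (X : ℝ → E2) (p : ℝ) : ℝ :=
  -(inner ℝ ((lenElem X p)⁻¹ • deriv (tvec X) p) (nvec X p) : ℝ)

/-- Curvature vector `κ⃗ = -κ ν`. -/
def kvec (X : ℝ → E2) (p : ℝ) : E2 := (-(curv X p)) • nvec X p

/-- Local total curvature `θ(p,q) = ∫_p^q κ ds`. -/
def theta (X : ℝ → E2) (p q : ℝ) : ℝ := ∫ r in p..q, curv X r * lenElem X r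

/-- Intrinsic (arc-length) distance `l(p,q) = ∫_p^q ds`. -/
def arcl (X : ℝ → E2) (p q : ℝ) : ℝ := ∫ r in p..q, lenElem X r

/-- `∫_p^q κ² ds`. -/
def sqCurvInt (X : ℝ → E2) (p q : ℝ) : ℝ := ∫ r in p..q, (curv X r)^2 * lenElem X r

/-- Total length `L` of the (1-periodic) curve. -/
def clen (X : ℝ → E2) : ℝ := arcl X 0 1

/-- Extrinsic distance `d(p,q) = ‖X(q) - X(p)‖`. -/
def extd (X : ℝ → E2) (p q : ℝ) : ℝ := ‖X q - X p‖

/-- The unit vector `w = (X(q) - X(p))/d(p,q)`. -/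
def wvec (X : ℝ → E2) (p q : ℝ) : E2 := (extd X p q)⁻¹ • (X q - X p)

/-- `ψ(p,q) = (L/π) sin(π l(p,q)/L)`. -/
def psi (X : ℝ → E2) (p q : ℝ) : ℝ :=
  (clen X / π) * Real.sin (π * arcl X p q / clen X)

/-- A closed smooth regular curve, modelled as a 1-periodic map `ℝ → ℝ²`. -/
def IsClosedCurve (X : ℝ → E2) : Prop :=
  ContDiff ℝ (⊤ : ℕ∞) X ∧ Function.Periodic X 1 ∧ ∀ p, deriv X p ≠ 0

/-- Embeddedness: self-intersections only at parameters differing by a full period. -/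
def IsEmbedded (X : ℝ → E2) : Prop :=
  ∀ p q : ℝ, X p = X q → ∃ k : ℤ, q - p = (k : ℝ)

/-- The set of values of the local total curvature over all pairs of points on the curve. -/
def thetaVals (X : ℝ → E2) : Set ℝ :=
  {x : ℝ | ∃ p q : ℝ, p ≤ q ∧ q ≤ p + 1 ∧ x = theta X p q}

/-- The time-`t` curve of a flow. -/
def curveAt (X : ℝ → ℝ → E2) (t : ℝ) : ℝ → E2 := fun p => X p t

/-- Joint smoothness of a flow of curves. -/
def SmoothFlow (X : ℝ → ℝ → E2) : Prop :=
  ContDiff ℝ (⊤ : ℕ∞) (fun z : ℝ × ℝ => X z.1 z.2)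

/-- The flow equation `∂X/∂t = (h(t) - κ)ν` holding for all times in `S`. -/
def FlowEq (X : ℝ → ℝ → E2) (h : ℝ → ℝ) (S : Set ℝ) : Prop :=
  ∀ p : ℝ, ∀ t ∈ S,
    HasDerivAt (fun s => X p s)
      ((h t - curv (curveAt X t) p) • nvec (curveAt X t) p) t

/-!
Along the segment `u ↦ (p + α u / v(p), q + β u / v(q))` in parameter space (`v` the speed), the
function `d² - (m ψ)²` with `m = d(p,q)/ψ(p,q)` has a local minimum at `u = 0`. The first
derivative gives `⟨w, τ_p⟩ = ⟨w, τ_q⟩ = m cos(π l/L)`, and the second derivative, after these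
are substituted, gives
`⟨w, β τ_q - α τ_p⟩² - ‖β τ_q - α τ_p‖² - (π d (β - α)/L)² ≤ d ⟨w, β² κ⃗_q - α² κ⃗_p⟩`.
Two unit vectors of the plane with the same component along `w` are equal or mirror images in
`w`, so `τ_q - σ τ_p` is parallel to `w` for some `σ = ±1`; taking `α = σ`, `β = 1` leaves
`d ⟨w, κ⃗_q - κ⃗_p⟩ ≥ -(π d (1 - σ)/L)² ≥ -4π² d²/L²`.
-/

open Filter Topology
open scoped RealInnerProductSpace

section SecondOrder

variable {F : Type*} [NormedAddCommGroup F] [InnerProductSpace ℝ F]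

theorem IsLocalMin.nonneg_of_hasDerivAt_deriv {f f' : ℝ → ℝ} {a c : ℝ} (h : IsLocalMin f a)
    (hf : ∀ᶠ x in 𝓝 a, HasDerivAt f (f' x) x) (hf' : HasDerivAt f' c a) : 0 ≤ c := by
  -- if `c < 0`, the second-derivative test makes `a` a local maximum too, so `f` is locally
  -- constant near `a` and `c = 0`
  by_contra! hc
  have hderiv : deriv f =ᶠ[𝓝 a] f' := hf.mono fun x hx => hx.deriv
  have hmax : IsLocalMax f a :=
    isLocalMax_of_deriv_deriv_neg ((hf'.congr_of_eventuallyEq hderiv).deriv ▸ hc)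
      h.deriv_eq_zero hf.self_of_nhds.continuousAt
  have hconst : f =ᶠ[𝓝 a] fun _ => f a := (h.and hmax).mono fun x hx => le_antisymm hx.2 hx.1
  have hzero : f' =ᶠ[𝓝 a] fun _ => 0 := by
    filter_upwards [hderiv.symm.trans hconst.deriv] with x hx
    simpa using hx
  exact hc.ne ((hf'.congr_of_eventuallyEq hzero.symm).unique (hasDerivAt_const a 0))

theorem IsLocalMin.inner_eq_and_le_of_norm_sq_sub_sq {e e₁ : ℝ → F} {e₂ : F}
    {h h₁ : ℝ → ℝ} {h₂ a : ℝ} (hmin : IsLocalMin (fun u => ‖e u‖ ^ 2 - h u ^ 2) a)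
    (he : ∀ u, HasDerivAt e (e₁ u) u) (he₁ : HasDerivAt e₁ e₂ a)
    (hh : ∀ u, HasDerivAt h (h₁ u) u) (hh₁ : HasDerivAt h₁ h₂ a) :
    ⟪e a, e₁ a⟫ = h a * h₁ a ∧ h₁ a ^ 2 + h a * h₂ ≤ ‖e₁ a‖ ^ 2 + ⟪e a, e₂⟫ := by
  have hderiv : ∀ u, HasDerivAt (fun u => ‖e u‖ ^ 2 - h u ^ 2)
      (2 * ⟪e u, e₁ u⟫ - 2 * h u * h₁ u) u := fun u =>
    ((he u).norm_sq.fun_sub ((hh u).fun_pow 2)).congr_deriv (by ring)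
  have hderiv₂ : HasDerivAt (fun u => 2 * ⟪e u, e₁ u⟫ - 2 * h u * h₁ u)
      (2 * (⟪e₁ a, e₁ a⟫ + ⟪e a, e₂⟫) - 2 * (h₁ a * h₁ a + h a * h₂)) a :=
    ((((he a).inner ℝ he₁).const_mul 2).sub (((hh a).const_mul 2).mul hh₁)).congr_deriv
      (by ring)
  have hfirst := hmin.hasDerivAt_eq_zero (hderiv a)
  have hsecond := hmin.nonneg_of_hasDerivAt_deriv (.of_forall hderiv) hderiv₂
  rw [real_inner_self_eq_norm_sq] at hsecond
  constructor <;> nlinarith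

end SecondOrder

theorem IsLocalMin.sq_sub_mul_sq_of_div {α : Type*} [TopologicalSpace α] {f g : α → ℝ} {a : α}
    (hmin : IsLocalMin (fun x => f x / g x) a) (hg : ∀ᶠ x in 𝓝 a, 0 < g x) (hf : 0 ≤ f a) :
    IsLocalMin (fun x => f x ^ 2 - (f a / g a * g x) ^ 2) a := by
  have hga : 0 < g a := hg.self_of_nhds
  have hm : 0 ≤ f a / g a := div_nonneg hf hga.le
  filter_upwards [hmin, hg] with x hx hgx
  have hle : f a / g a * g x ≤ f x := (le_div_iff₀ hgx).1 hx
  have hsq : (f a / g a * g x) ^ 2 ≤ f x ^ 2 := pow_le_pow_left₀ (by positivity) hle 2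
  rw [div_mul_cancel₀ _ hga.ne']
  linarith

section SineArc

variable {ℓ ℓ₁ : ℝ → ℝ} {ℓ' ℓ₂ L x : ℝ}

theorem HasDerivAt.div_pi_mul_sin_pi_mul_div (hL : L ≠ 0) (hℓ : HasDerivAt ℓ ℓ' x) :
    HasDerivAt (fun u => L / π * Real.sin (π * ℓ u / L)) (Real.cos (π * ℓ x / L) * ℓ') x :=
  ((((hℓ.const_mul π).div_const L).sin).const_mul (L / π)).congr_deriv (by field_simp)

theorem HasDerivAt.cos_pi_mul_div_mul (hℓ : HasDerivAt ℓ ℓ' x) (hℓ₁ : HasDerivAt ℓ₁ ℓ₂ x) :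
    HasDerivAt (fun u => Real.cos (π * ℓ u / L) * ℓ₁ u)
      (Real.cos (π * ℓ x / L) * ℓ₂ - π / L * Real.sin (π * ℓ x / L) * ℓ' * ℓ₁ x) x :=
  (((hℓ.const_mul π).div_const L).cos.mul hℓ₁).congr_deriv (by ring)

end SineArc

theorem HasDerivAt.comp_const_add_mul {E : Type*} [NormedAddCommGroup E] [NormedSpace ℝ E]
    {f : ℝ → E} {f' : E} {r k u : ℝ} (hf : HasDerivAt f f' (r + k * u)) :
    HasDerivAt (fun u => f (r + k * u)) (k • f') u := by
  simpa [Function.comp_def] using hf.scomp u (((hasDerivAt_id u).const_mul k).const_add r)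

theorem eq_inner_smul_add_inner_rot90_smul {τ : E2} (hτ : ‖τ‖ = 1) (x : E2) :
    x = ⟪x, τ⟫ • τ + ⟪x, rot90 τ⟫ • rot90 τ := by
  have h1 : τ 0 ^ 2 + τ 1 ^ 2 = 1 := by
    simpa [EuclideanSpace.norm_eq, Fin.sum_univ_two, Real.sqrt_eq_one] using hτ
  ext i
  fin_cases i <;> simp [rot90, PiLp.inner_apply, Fin.sum_univ_two] <;>
    linear_combination (-x _) * h1

theorem norm_sq_eq_inner_sq_add_inner_rot90_sq {w : E2} (hw : ‖w‖ = 1) (x : E2) :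
    ‖x‖ ^ 2 = ⟪x, w⟫ ^ 2 + ⟪x, rot90 w⟫ ^ 2 := by
  rw [← real_inner_self_eq_norm_sq]
  nth_rewrite 1 [eq_inner_smul_add_inner_rot90_smul hw x]
  rw [inner_add_left, real_inner_smul_left, real_inner_smul_left, real_inner_comm w,
    real_inner_comm (rot90 w)]
  ring

/-- Two vectors of equal length with the same component along a unit vector `w` are equal or
mirror images in the line of `w`. -/
theorem exists_sign_norm_sub_smul_sq_eq_inner_sq {w s t : E2} (hw : ‖w‖ = 1) (hst : ‖s‖ = ‖t‖)
    (hinner : ⟪w, s⟫ = ⟪w, t⟫) :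
    ∃ σ : ℝ, (σ = 1 ∨ σ = -1) ∧ ‖t - σ • s‖ ^ 2 = ⟪w, t - σ • s⟫ ^ 2 := by
  have hrot : ⟪t, rot90 w⟫ ^ 2 = ⟪s, rot90 w⟫ ^ 2 := by
    have hs := norm_sq_eq_inner_sq_add_inner_rot90_sq hw s
    have ht := norm_sq_eq_inner_sq_add_inner_rot90_sq hw t
    rw [real_inner_comm w, hst, hinner] at hs
    rw [real_inner_comm w] at ht
    linarith
  have key : ∀ σ : ℝ, ⟪t, rot90 w⟫ = σ * ⟪s, rot90 w⟫ →
      ‖t - σ • s‖ ^ 2 = ⟪w, t - σ • s⟫ ^ 2 := fun σ hσ => by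
    simp only [norm_sq_eq_inner_sq_add_inner_rot90_sq hw, inner_sub_left, inner_sub_right,
      real_inner_smul_left, real_inner_smul_right, hσ, real_inner_comm w]
    ring
  rcases sq_eq_sq_iff_eq_or_eq_neg.1 hrot with h | h
  · exact ⟨1, .inl rfl, key 1 (by rw [h, one_mul])⟩
  · exact ⟨-1, .inr rfl, key (-1) (by rw [h, neg_one_mul])⟩

section Curve

variable {X : ℝ → E2}

theorem lenElem_pos (hX' : ∀ r, deriv X r ≠ 0) (r : ℝ) : 0 < lenElem X r :=
  norm_pos_iff.2 (hX' r)

theorem contDiff_lenElem (hX : ContDiff ℝ (⊤ : ℕ∞) X) (hX' : ∀ r, deriv X r ≠ 0) :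
    ContDiff ℝ (⊤ : ℕ∞) (lenElem X) :=
  ContDiff.norm ℝ (contDiff_infty_iff_deriv.1 hX).2 hX'

theorem continuous_lenElem (hX : ContDiff ℝ (⊤ : ℕ∞) X) : Continuous (lenElem X) :=
  (hX.continuous_deriv (by simp)).norm

theorem norm_tvec (hX' : ∀ r, deriv X r ≠ 0) (r : ℝ) : ‖tvec X r‖ = 1 := by
  rw [tvec, norm_smul, norm_inv, lenElem, norm_norm, inv_mul_cancel₀ (norm_ne_zero_iff.2 (hX' r))]

theorem lenElem_smul_tvec (hX' : ∀ r, deriv X r ≠ 0) (r : ℝ) :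
    lenElem X r • tvec X r = deriv X r := by
  rw [tvec, smul_inv_smul₀ (lenElem_pos hX' r).ne']

theorem hasDerivAt_tvec (hX : ContDiff ℝ (⊤ : ℕ∞) X) (hX' : ∀ r, deriv X r ≠ 0) (r : ℝ) :
    HasDerivAt (tvec X) (deriv (tvec X) r) r :=
  ((((contDiff_lenElem hX hX').differentiable (by simp) r).inv (lenElem_pos hX' r).ne').smul
    ((hX.of_le (WithTop.coe_le_coe.2 le_top)).differentiable_deriv_two r)).hasDerivAt

theorem inner_deriv_tvec_tvec (hX : ContDiff ℝ (⊤ : ℕ∞) X) (hX' : ∀ r, deriv X r ≠ 0) (r : ℝ) :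
    ⟪deriv (tvec X) r, tvec X r⟫ = 0 := by
  -- differentiate `‖τ‖² = 1`
  have h := (hasDerivAt_tvec hX hX' r).norm_sq
  simp only [norm_tvec hX'] at h
  rw [real_inner_comm]
  linarith [h.unique (hasDerivAt_const r (1 ^ 2 : ℝ))]

theorem deriv_tvec (hX : ContDiff ℝ (⊤ : ℕ∞) X) (hX' : ∀ r, deriv X r ≠ 0) (r : ℝ) :
    deriv (tvec X) r = lenElem X r • kvec X r := by
  have hdecomp := eq_inner_smul_add_inner_rot90_smul (norm_tvec hX' r) (deriv (tvec X) r)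
  rw [inner_deriv_tvec_tvec hX hX', zero_smul, zero_add] at hdecomp
  rw [kvec, curv, neg_neg, real_inner_smul_left, ← smul_smul,
    smul_inv_smul₀ (lenElem_pos hX' r).ne', nvec, ← hdecomp]

theorem deriv_deriv_eq (hX : ContDiff ℝ (⊤ : ℕ∞) X) (hX' : ∀ r, deriv X r ≠ 0) (r : ℝ) :
    deriv (deriv X) r = lenElem X r ^ 2 • kvec X r + deriv (lenElem X) r • tvec X r := by
  have h : HasDerivAt (fun u => lenElem X u • tvec X u)
      (lenElem X r • deriv (tvec X) r + deriv (lenElem X) r • tvec X r) r :=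
    (((contDiff_lenElem hX hX').differentiable (by simp) r).hasDerivAt).smul
      (hasDerivAt_tvec hX hX' r)
  simp only [lenElem_smul_tvec hX'] at h
  rw [h.deriv, deriv_tvec hX hX', smul_smul, sq]

end Curve

section ArcLength

variable {X : ℝ → E2}

theorem hasDerivAt_arcl_zero (hX : ContDiff ℝ (⊤ : ℕ∞) X) (r : ℝ) :
    HasDerivAt (arcl X 0) (lenElem X r) r :=
  ((continuous_lenElem hX).integral_hasStrictDerivAt 0 r).hasDerivAt

theorem arcl_eq_sub (hX : ContDiff ℝ (⊤ : ℕ∞) X) (a b : ℝ) :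
    arcl X a b = arcl X 0 b - arcl X 0 a :=
  (intervalIntegral.integral_interval_sub_left ((continuous_lenElem hX).intervalIntegrable _ _)
    ((continuous_lenElem hX).intervalIntegrable _ _)).symm

theorem arcl_pos (hX : ContDiff ℝ (⊤ : ℕ∞) X) (hX' : ∀ r, deriv X r ≠ 0) {a b : ℝ}
    (hab : a < b) : 0 < arcl X a b :=
  intervalIntegral.intervalIntegral_pos_of_pos ((continuous_lenElem hX).intervalIntegrable _ _)
    (lenElem_pos hX') hab

theorem continuous_psi (hX : ContDiff ℝ (⊤ : ℕ∞) X) :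
    Continuous fun z : ℝ × ℝ => psi X z.1 z.2 := by
  have hs : Continuous (arcl X 0) := continuous_iff_continuousAt.2 fun r =>
    (hasDerivAt_arcl_zero hX r).continuousAt
  have hpsi : (fun z : ℝ × ℝ => psi X z.1 z.2) =
      fun z => clen X / π * Real.sin (π * (arcl X 0 z.2 - arcl X 0 z.1) / clen X) := by
    funext z
    rw [psi, arcl_eq_sub hX z.1]
  rw [hpsi]
  fun_prop

theorem psi_pos (hX : ContDiff ℝ (⊤ : ℕ∞) X) (hX' : ∀ r, deriv X r ≠ 0) {p q : ℝ}
    (hpq : p < q) (hl : arcl X p q ≤ clen X / 2) : 0 < psi X p q := by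
  have hL : 0 < clen X := arcl_pos hX hX' one_pos
  have hθ : 0 < π * arcl X p q / clen X := by have := arcl_pos hX hX' hpq; positivity
  have hθπ : π * arcl X p q / clen X < π := by
    rw [div_lt_iff₀ hL]
    nlinarith [Real.pi_pos]
  exact mul_pos (div_pos hL Real.pi_pos) (Real.sin_pos_of_pos_of_lt_pi hθ hθπ)

end ArcLength

section Variation

variable {X : ℝ → E2} {p q : ℝ}

theorem hasDerivAt_smul_deriv_comp_line (hX : ContDiff ℝ (⊤ : ℕ∞) X) (hX' : ∀ r, deriv X r ≠ 0)
    (r α : ℝ) :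
    HasDerivAt (fun u => (α / lenElem X r) • deriv X (r + α / lenElem X r * u))
      (α ^ 2 • (kvec X r + (deriv (lenElem X) r / lenElem X r ^ 2) • tvec X r)) 0 := by
  have hX'' := (hX.of_le (WithTop.coe_le_coe.2 le_top)).differentiable_deriv_two
  have h := ((hX'' _).hasDerivAt.comp_const_add_mul (r := r) (k := α / lenElem X r)
    (u := 0)).const_smul (α / lenElem X r)
  refine h.congr_deriv ?_
  have hv := (lenElem_pos hX' r).ne'
  rw [mul_zero, add_zero, deriv_deriv_eq hX hX', smul_smul, smul_add, smul_add, smul_smul,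
    smul_smul, smul_smul]
  congr 2 <;> field_simp

theorem hasDerivAt_mul_lenElem_comp_line (hX : ContDiff ℝ (⊤ : ℕ∞) X) (hX' : ∀ r, deriv X r ≠ 0)
    (r α : ℝ) :
    HasDerivAt (fun u => α / lenElem X r * lenElem X (r + α / lenElem X r * u))
      (α ^ 2 * (deriv (lenElem X) r / lenElem X r ^ 2)) 0 := by
  have hv' := (contDiff_lenElem hX hX').differentiable (by simp)
  have h := ((hv' _).hasDerivAt.comp_const_add_mul (r := r) (k := α / lenElem X r)
    (u := 0)).const_mul (α / lenElem X r)
  refine h.congr_deriv ?_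
  have hv := (lenElem_pos hX' r).ne'
  rw [mul_zero, add_zero, smul_eq_mul]
  field_simp

/-- First- and second-order conditions at `u = 0` for the local minimum of `d² - (m ψ)²`,
`m = d(p,q)/ψ(p,q)`, along `u ↦ (p + α u / v(p), q + β u / v(q))`. -/
theorem variation_along_arclength_line (hX : ContDiff ℝ (⊤ : ℕ∞) X)
    (hX' : ∀ r, deriv X r ≠ 0) (hψ : 0 < psi X p q)
    (hmin : IsLocalMin (fun z : ℝ × ℝ => extd X z.1 z.2 / psi X z.1 z.2) (p, q)) (α β : ℝ) :
    ⟪X q - X p, β • tvec X q - α • tvec X p⟫ = extd X p q *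
        (extd X p q / psi X p q * (Real.cos (π * arcl X p q / clen X) * (β - α))) ∧
      (extd X p q / psi X p q * (Real.cos (π * arcl X p q / clen X) * (β - α))) ^ 2 +
          extd X p q * (extd X p q / psi X p q *
            (Real.cos (π * arcl X p q / clen X) *
                (β ^ 2 * (deriv (lenElem X) q / lenElem X q ^ 2) -
                  α ^ 2 * (deriv (lenElem X) p / lenElem X p ^ 2)) -
              π / clen X * Real.sin (π * arcl X p q / clen X) * (β - α) * (β - α))) ≤
        ‖β • tvec X q - α • tvec X p‖ ^ 2 +
          ⟪X q - X p, β ^ 2 • (kvec X q + (deriv (lenElem X) q / lenElem X q ^ 2) • tvec X q) -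
            α ^ 2 • (kvec X p + (deriv (lenElem X) p / lenElem X p ^ 2) • tvec X p)⟫ := by
  set m := extd X p q / psi X p q
  set L := clen X
  set kp := α / lenElem X p
  set kq := β / lenElem X q
  set ℓ : ℝ → ℝ := fun u => arcl X (p + kp * u) (q + kq * u)
  have hL : L ≠ 0 := by
    rintro hL
    simp [psi, L, hL] at hψ
  have hℓ : ∀ u, HasDerivAt ℓ (kq * lenElem X (q + kq * u) - kp * lenElem X (p + kp * u)) u := by
    intro u
    simp only [ℓ, arcl_eq_sub hX (p + kp * _)]
    exact ((hasDerivAt_arcl_zero hX _).comp_const_add_mul).sub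
      ((hasDerivAt_arcl_zero hX _).comp_const_add_mul)
  have hline : IsLocalMin (fun u => ‖X (q + kq * u) - X (p + kp * u)‖ ^ 2 -
      (m * (L / π * Real.sin (π * ℓ u / L))) ^ 2) 0 := by
    have hpos : ∀ᶠ z in 𝓝 (p, q), 0 < psi X z.1 z.2 :=
      (continuous_psi hX).continuousAt.eventually (lt_mem_nhds hψ)
    have hg : Tendsto (fun u => (p + kp * u, q + kq * u)) (𝓝 0) (𝓝 (p, q)) := by
      simpa using (show Continuous fun u : ℝ => (p + kp * u, q + kq * u) by fun_prop).tendsto 0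
    filter_upwards [hg.eventually (hmin.sq_sub_mul_sq_of_div hpos (norm_nonneg _))]
      with u hu
    simpa [ℓ, extd, psi, m, L] using hu
  have he : ∀ u, HasDerivAt (fun u => X (q + kq * u) - X (p + kp * u))
      (kq • deriv X (q + kq * u) - kp • deriv X (p + kp * u)) u := fun u =>
    (hX.differentiable (by simp) _).hasDerivAt.comp_const_add_mul.sub
      (hX.differentiable (by simp) _).hasDerivAt.comp_const_add_mul
  have hh : ∀ u, HasDerivAt (fun u => m * (L / π * Real.sin (π * ℓ u / L)))
      (m * (Real.cos (π * ℓ u / L) * (kq * lenElem X (q + kq * u) - kp * lenElem X (p + kp * u))))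
      u := fun u => ((hℓ u).div_pi_mul_sin_pi_mul_div hL).const_mul m
  have hh₁ := (((hℓ 0).cos_pi_mul_div_mul (L := L)
    ((hasDerivAt_mul_lenElem_comp_line hX hX' q β).fun_sub
      (hasDerivAt_mul_lenElem_comp_line hX hX' p α))).const_mul m)
  obtain ⟨hfirst, hsecond⟩ := hline.inner_eq_and_le_of_norm_sq_sub_sq he
    ((hasDerivAt_smul_deriv_comp_line hX hX' q β).sub
      (hasDerivAt_smul_deriv_comp_line hX hX' p α)) hh hh₁
  have hunit : ∀ r γ, (γ / lenElem X r) • deriv X r = γ • tvec X r := fun r γ => by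
    rw [← lenElem_smul_tvec hX', smul_smul, div_mul_cancel₀ _ (lenElem_pos hX' r).ne']
  have hspeed : ∀ r γ : ℝ, γ / lenElem X r * lenElem X r = γ := fun r γ =>
    div_mul_cancel₀ _ (lenElem_pos hX' r).ne'
  have hd : m * (L / π * Real.sin (π * arcl X p q / L)) = extd X p q :=
    div_mul_cancel₀ _ hψ.ne'
  simp only [ℓ, kp, kq, mul_zero, add_zero, hunit, hspeed, hd] at hfirst hsecond
  exact ⟨hfirst, hsecond⟩

theorem inner_sub_eq_extd_mul_inner_wvec (x : E2) :
    ⟪X q - X p, x⟫ = extd X p q * ⟪wvec X p q, x⟫ := by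
  rcases eq_or_ne (extd X p q) 0 with hd | hd
  · rw [hd, zero_mul, norm_eq_zero.1 hd, inner_zero_left]
  · rw [wvec, real_inner_smul_left, mul_inv_cancel_left₀ hd]

theorem norm_wvec (hd : extd X p q ≠ 0) : ‖wvec X p q‖ = 1 := by
  rw [wvec, norm_smul, norm_inv, extd, norm_norm]
  exact inv_mul_cancel₀ hd

theorem first_variation (hX : ContDiff ℝ (⊤ : ℕ∞) X) (hX' : ∀ r, deriv X r ≠ 0)
    (hψ : 0 < psi X p q) (hd : 0 < extd X p q)
    (hmin : IsLocalMin (fun z : ℝ × ℝ => extd X z.1 z.2 / psi X z.1 z.2) (p, q)) :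
    ⟪wvec X p q, tvec X p⟫ = extd X p q / psi X p q * Real.cos (π * arcl X p q / clen X) ∧
      ⟪wvec X p q, tvec X q⟫ = extd X p q / psi X p q * Real.cos (π * arcl X p q / clen X) := by
  have hp := (variation_along_arclength_line hX hX' hψ hmin 1 0).1
  have hq := (variation_along_arclength_line hX hX' hψ hmin 0 1).1
  simp only [zero_smul, one_smul, zero_sub, sub_zero, inner_neg_right,
    inner_sub_eq_extd_mul_inner_wvec] at hp hq
  constructor
  · nlinarith
  · nlinarith

theorem second_variation (hX : ContDiff ℝ (⊤ : ℕ∞) X) (hX' : ∀ r, deriv X r ≠ 0)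
    (hψ : 0 < psi X p q) (hd : 0 < extd X p q)
    (hmin : IsLocalMin (fun z : ℝ × ℝ => extd X z.1 z.2 / psi X z.1 z.2) (p, q)) (α β : ℝ) :
    ⟪wvec X p q, β • tvec X q - α • tvec X p⟫ ^ 2 - ‖β • tvec X q - α • tvec X p‖ ^ 2 -
        (π * extd X p q * (β - α) / clen X) ^ 2 ≤
      extd X p q * ⟪wvec X p q, β ^ 2 • kvec X q - α ^ 2 • kvec X p⟫ := by
  obtain ⟨hp, hq⟩ := first_variation hX hX' hψ hd hmin
  have h := (variation_along_arclength_line hX hX' hψ hmin α β).2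
  simp only [inner_sub_eq_extd_mul_inner_wvec, inner_sub_right, inner_add_right,
    real_inner_smul_right, hp, hq] at h ⊢
  have hψ' := hψ
  rw [psi] at hψ'
  have hL : clen X ≠ 0 := by rintro h0; simp [h0] at hψ'
  have hsin : Real.sin (π * arcl X p q / clen X) ≠ 0 := by rintro h0; simp [h0] at hψ'
  have hcurv : extd X p q / psi X p q * (π / clen X * Real.sin (π * arcl X p q / clen X)) =
      π ^ 2 * extd X p q / clen X ^ 2 := by
    rw [psi]
    field_simp
  linear_combination h + extd X p q * (β - α) ^ 2 * hcurv

theorem inner_wvec_kvec_sub_kvec_ge (hX : ContDiff ℝ (⊤ : ℕ∞) X) (hX' : ∀ r, deriv X r ≠ 0)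
    (hψ : 0 < psi X p q) (hd : 0 < extd X p q)
    (hmin : IsLocalMin (fun z : ℝ × ℝ => extd X z.1 z.2 / psi X z.1 z.2) (p, q)) :
    -(4 * π ^ 2 * extd X p q / clen X ^ 2) ≤ ⟪wvec X p q, kvec X q - kvec X p⟫ := by
  obtain ⟨hp, hq⟩ := first_variation hX hX' hψ hd hmin
  obtain ⟨σ, hσ, hpar⟩ := exists_sign_norm_sub_smul_sq_eq_inner_sq (norm_wvec hd.ne')
    ((norm_tvec hX' p).trans (norm_tvec hX' q).symm) (hp.trans hq.symm)
  have hσ2 : σ ^ 2 = 1 := by rcases hσ with rfl | rfl <;> norm_num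
  have h := second_variation hX hX' hψ hd hmin σ 1
  rw [one_smul, one_pow, one_smul, hσ2, one_smul, hpar, sub_self, zero_sub] at h
  have hσ' : (1 - σ) ^ 2 ≤ 4 := by rcases hσ with rfl | rfl <;> norm_num
  refine le_of_mul_le_mul_left (h.trans' ?_) hd
  calc extd X p q * -(4 * π ^ 2 * extd X p q / clen X ^ 2)
      = -(π * extd X p q / clen X) ^ 2 * 4 := by ring
    _ ≤ -(π * extd X p q / clen X) ^ 2 * (1 - σ) ^ 2 :=
      mul_le_mul_of_nonpos_left hσ' (neg_nonpos.2 (sq_nonneg _))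
    _ = -(π * extd X p q * (1 - σ) / clen X) ^ 2 := by ring

end Variation

theorem IsEmbedded.extd_pos {X : ℝ → E2} (hemb : IsEmbedded X) {p q : ℝ} (hpq : p < q)
    (hq : q < p + 1) : 0 < extd X p q := by
  refine norm_pos_iff.2 (sub_ne_zero.2 fun h => ?_)
  obtain ⟨k, hk⟩ := hemb p q h.symm
  have h0 : (0 : ℝ) < k := by linarith
  have h1 : (k : ℝ) < 1 := by linarith
  norm_cast at h0 h1
  omega

/-- **Second-derivative conditions at a spatial minimum of `d/ψ`.**
If `d/ψ` attains a local minimum at `(p,q)` with `p ≠ q` and `l(p,q) ≤ L/2`, then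
`⟨w, κ⃗_q - κ⃗_p⟩ ≥ -4π² d/L²`, and by the definition of `ψ` the right-hand side equals
`-(4π d/(ψ L)) sin(π l/L)`. -/
theorem second_derivative_conditions_at_min
    (X : ℝ → E2) (hcc : IsClosedCurve X) (hemb : IsEmbedded X)
    (p q : ℝ) (hpq : p < q) (hq : q < p + 1)
    (hl : arcl X p q ≤ clen X / 2)
    (hmin : IsLocalMin (fun z : ℝ × ℝ => extd X z.1 z.2 / psi X z.1 z.2) (p, q)) :
    (inner ℝ (wvec X p q) (kvec X q - kvec X p) : ℝ)
        ≥ -(4 * π ^ 2 * extd X p q / (clen X) ^ 2) ∧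
    -(4 * π ^ 2 * extd X p q / (clen X) ^ 2)
        = -(4 * π * extd X p q / (psi X p q * clen X)) * Real.sin (π * arcl X p q / clen X) := by
  obtain ⟨hX, -, hX'⟩ := hcc
  have hd := hemb.extd_pos hpq hq
  have hL : clen X ≠ 0 := (arcl_pos hX hX' one_pos).ne'
  have hψ := psi_pos hX hX' hpq hl
  refine ⟨inner_wvec_kvec_sub_kvec_ge hX hX' hψ hd hmin, ?_⟩
  rw [show Real.sin (π * arcl X p q / clen X) = π * psi X p q / clen X by rw [psi]; field_simp]
  field_simp
end
end

section
/- Let X : S¹ × (0,T) → ℝ² be a smooth solution of ∂X/∂t = (h(t) − κ)ν through embedded closed curves with total curvature ∫_{Σ_t} κ ds_t = 2π. Then, at every (p,q,t) with d(p,q,t) ≠ 0, the ratio d/ψ evolves by ∂/∂t (d/ψ) = (1/ψ)(h⟨w, ν_q − ν_p⟩ + ⟨w, κ⃗_q − κ⃗_p⟩) − (d/ψ²) cos(π l/L) (h ∫_p^q κ ds_t − ∫_p^q κ² ds_t) + (d/(π ψ²)) (∫_{Σ_t} κ² ds_t − 2π h)(sin(π l/L) − (π l/L) cos(π l/L)).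 -/
open Real Set MeasureTheory

noncomputable section

/-! The distance `d` is differentiated directly from the normal velocities of `X(p)` and `X(q)`.
For `l` and `L`, the length element `v = ‖∂ₚX‖` satisfies `∂ₜv = ⟨τ, ∂ₚ∂ₜX⟩ = (h - κ) κ v`
once the mixed partials are exchanged, so differentiating under the integral sign gives
`∂ₜl = h ∫_p^q κ ds - ∫_p^q κ² ds`, and `∂ₜL = 2πh - ∫ κ² ds` by the total curvature condition.
Since `d ≠ 0`, the points `p` and `q` are not a whole period apart, so `l` is not a multiple of `L`
and `ψ ≠ 0`; the formula is then the quotient and chain rules. -/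

open Function
open scoped ContDiff Interval RealInnerProductSpace

lemma HasDerivAt.norm {E : Type*} [NormedAddCommGroup E] [InnerProductSpace ℝ E] {f : ℝ → E}
    {f' : E} {x : ℝ} (hf : HasDerivAt f f' x) (h0 : f x ≠ 0) :
    HasDerivAt (fun y => ‖f y‖) ⟪‖f x‖⁻¹ • f x, f'⟫ x := by
  have hsq := hf.norm_sq.sqrt (by positivity)
  simp only [Real.sqrt_sq (norm_nonneg _)] at hsq
  convert hsq using 1
  rw [real_inner_smul_left]
  field_simp

section TwoVariables

variable {E : Type*} [NormedAddCommGroup E] [NormedSpace ℝ E] {F : ℝ → ℝ → E} {r s : ℝ}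

lemma HasFDerivAt.hasDerivAt_fst {Φ : ℝ × ℝ → E} {Φ' : ℝ × ℝ →L[ℝ] E}
    (hΦ : HasFDerivAt Φ Φ' (r, s)) : HasDerivAt (fun r => Φ (r, s)) (Φ' (1, 0)) r :=
  hΦ.comp_hasDerivAt r ((hasDerivAt_id r).prodMk (hasDerivAt_const r s))

lemma HasFDerivAt.hasDerivAt_snd {Φ : ℝ × ℝ → E} {Φ' : ℝ × ℝ →L[ℝ] E}
    (hΦ : HasFDerivAt Φ Φ' (r, s)) : HasDerivAt (fun s => Φ (r, s)) (Φ' (0, 1)) s :=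
  hΦ.comp_hasDerivAt s ((hasDerivAt_const s r).prodMk (hasDerivAt_id s))

lemma deriv_fst_eq_fderiv (hF : DifferentiableAt ℝ (uncurry F) (r, s)) :
    deriv (F · s) r = fderiv ℝ (uncurry F) (r, s) (1, 0) :=
  hF.hasFDerivAt.hasDerivAt_fst.deriv

lemma deriv_snd_eq_fderiv (hF : DifferentiableAt ℝ (uncurry F) (r, s)) :
    deriv (F r ·) s = fderiv ℝ (uncurry F) (r, s) (0, 1) :=
  hF.hasFDerivAt.hasDerivAt_snd.deriv

variable {n m : WithTop ℕ∞}

lemma ContDiff.uncurry_deriv_fst (hF : ContDiff ℝ n (uncurry F)) (hmn : m + 1 ≤ n) :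
    ContDiff ℝ m (uncurry fun r s => deriv (F · s) r) := by
  have hd : Differentiable ℝ (uncurry F) :=
    hF.differentiable (by intro h; simp [h] at hmn)
  have : (uncurry fun r s => deriv (F · s) r) = fun z => fderiv ℝ (uncurry F) z (1, 0) :=
    funext fun z => deriv_fst_eq_fderiv (hd z)
  rw [this]
  exact (hF.fderiv_right hmn).clm_apply contDiff_const

lemma ContDiff.uncurry_deriv_snd (hF : ContDiff ℝ n (uncurry F)) (hmn : m + 1 ≤ n) :
    ContDiff ℝ m (uncurry fun r s => deriv (F r ·) s) := by
  have hd : Differentiable ℝ (uncurry F) :=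
    hF.differentiable (by intro h; simp [h] at hmn)
  have : (uncurry fun r s => deriv (F r ·) s) = fun z => fderiv ℝ (uncurry F) z (0, 1) :=
    funext fun z => deriv_snd_eq_fderiv (hd z)
  rw [this]
  exact (hF.fderiv_right hmn).clm_apply contDiff_const

lemma deriv_deriv_comm (hF : ContDiff ℝ 2 (uncurry F)) (r s : ℝ) :
    deriv (fun s => deriv (F · s) r) s = deriv (fun r => deriv (F r ·) s) r := by
  have hd : Differentiable ℝ (uncurry F) := hF.differentiable two_ne_zero
  have hd2 := ((hF.fderiv_right (m := 1) le_rfl).differentiable one_ne_zero (r, s)).hasFDerivAt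
  have hsymm := (hF.contDiffAt (x := (r, s))).isSymmSndFDerivAt (by simp)
  have h1 := (hd2.clm_apply (hasFDerivAt_const ((1 : ℝ), (0 : ℝ)) _)).hasDerivAt_snd
  have h2 := (hd2.clm_apply (hasFDerivAt_const ((0 : ℝ), (1 : ℝ)) _)).hasDerivAt_fst
  rw [funext fun s => deriv_fst_eq_fderiv (hd (r, s)),
    funext fun r => deriv_snd_eq_fderiv (hd (r, s)), h1.deriv, h2.deriv]
  simpa using hsymm (0, 1) (1, 0)

end TwoVariables

lemma hasDerivAt_intervalIntegral_of_continuousOn {E : Type*} [NormedAddCommGroup E]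
    [NormedSpace ℝ E] {G G' : ℝ → ℝ → E} {U : Set ℝ} {a b t : ℝ} (hU : IsOpen U) (ht : t ∈ U)
    (hG : ∀ s ∈ U, ContinuousOn (G · s) [[a, b]])
    (hG' : ∀ r ∈ [[a, b]], ∀ s ∈ U, HasDerivAt (G r) (G' r s) s)
    (hG'c : ContinuousOn (uncurry G') ([[a, b]] ×ˢ U)) :
    HasDerivAt (fun s => ∫ r in a..b, G r s) (∫ r in a..b, G' r t) t := by
  obtain ⟨ε, hε, hεU⟩ := Metric.nhds_basis_closedBall.mem_iff.mp (hU.mem_nhds ht)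
  obtain ⟨C, hC⟩ := (isCompact_uIcc.prod (isCompact_closedBall t ε)).exists_bound_of_continuousOn
    (hG'c.mono (prod_mono le_rfl hεU))
  have hG't : ContinuousOn (G' · t) [[a, b]] :=
    hG'c.comp (continuousOn_id.prodMk continuousOn_const) fun r hr => ⟨hr, ht⟩
  refine (intervalIntegral.hasDerivAt_integral_of_dominated_loc_of_deriv_le
    (F := fun s r => G r s) (F' := fun s r => G' r s) (bound := fun _ => C)
    (Metric.ball_mem_nhds t hε) ?_ (hG t ht).intervalIntegrable
    (intervalIntegrable_iff.mp hG't.intervalIntegrable).aestronglyMeasurable ?_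
    intervalIntegrable_const ?_).2
  · filter_upwards [hU.mem_nhds ht] with s hs
    exact (intervalIntegrable_iff.mp (hG s hs).intervalIntegrable).aestronglyMeasurable
  · exact Filter.Eventually.of_forall fun r hr s hs =>
      hC (r, s) ⟨uIoc_subset_uIcc hr, Metric.ball_subset_closedBall hs⟩
  · exact Filter.Eventually.of_forall fun r hr s hs =>
      hG' r (uIoc_subset_uIcc hr) s (hεU (Metric.ball_subset_closedBall hs))

def rot90L : E2 →L[ℝ] E2 :=
  LinearMap.toContinuousLinearMap
    { toFun := rot90
      map_add' := fun u v => by ext i; fin_cases i <;> simp [rot90]; ring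
      map_smul' := fun c u => by ext i; fin_cases i <;> simp [rot90] }

lemma inner_rot90_right (u w : E2) : ⟪u, rot90 w⟫ = -⟪rot90 u, w⟫ := by
  simp [PiLp.inner_apply, Fin.sum_univ_two, rot90]

lemma inner_rot90_self (u : E2) : ⟪u, rot90 u⟫ = 0 := by
  simp [PiLp.inner_apply, Fin.sum_univ_two, rot90]; ring

section PlaneCurve

variable {Y : ℝ → E2} {n : WithTop ℕ∞}

lemma lenElem_pos_iff {r : ℝ} : 0 < lenElem Y r ↔ deriv Y r ≠ 0 := norm_pos_iff

lemma contDiff_lenElem_s9 (hY : ContDiff ℝ (n + 1) Y) (hreg : ∀ r, deriv Y r ≠ 0) :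
    ContDiff ℝ n (lenElem Y) :=
  (contDiff_succ_iff_deriv.mp hY).2.2.norm ℝ hreg

lemma contDiff_tvec (hY : ContDiff ℝ (n + 1) Y) (hreg : ∀ r, deriv Y r ≠ 0) :
    ContDiff ℝ n (tvec Y) :=
  ((contDiff_lenElem_s9 hY hreg).inv fun r => (lenElem_pos_iff.mpr (hreg r)).ne').smul
    (contDiff_succ_iff_deriv.mp hY).2.2

lemma contDiff_nvec (hY : ContDiff ℝ (n + 1) Y) (hreg : ∀ r, deriv Y r ≠ 0) :
    ContDiff ℝ n (nvec Y) :=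
  rot90L.contDiff.comp (contDiff_tvec hY hreg)

lemma contDiff_curv (hY : ContDiff ℝ (n + 2) Y) (hreg : ∀ r, deriv Y r ≠ 0) :
    ContDiff ℝ n (curv Y) := by
  have hY1 : ContDiff ℝ (n + 1) Y := hY.of_le (by gcongr; norm_num)
  have hτ' : ContDiff ℝ n (deriv (tvec Y)) :=
    (contDiff_succ_iff_deriv.mp (contDiff_tvec (add_assoc n 1 1 ▸ hY) hreg)).2.2
  have hv : ContDiff ℝ n fun r => (lenElem Y r)⁻¹ :=
    (contDiff_lenElem_s9 hY1 hreg).inv fun r => (lenElem_pos_iff.mpr (hreg r)).ne'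
  exact ((hv.smul hτ').inner ℝ (contDiff_nvec hY1 hreg)).neg

lemma hasDerivAt_nvec {r : ℝ} (hτ : DifferentiableAt ℝ (tvec Y) r) :
    HasDerivAt (nvec Y) (rot90 (deriv (tvec Y) r)) r :=
  rot90L.hasFDerivAt.comp_hasDerivAt r hτ.hasDerivAt

lemma inner_tvec_deriv_smul_nvec {g : ℝ → ℝ} {r : ℝ} (hτ : DifferentiableAt ℝ (tvec Y) r)
    (hg : DifferentiableAt ℝ g r) (hreg : deriv Y r ≠ 0) :
    ⟪tvec Y r, deriv (fun r => g r • nvec Y r) r⟫ = g r * curv Y r * lenElem Y r := by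
  have hv : lenElem Y r ≠ 0 := (lenElem_pos_iff.mpr hreg).ne'
  rw [HasDerivAt.deriv (f := fun r => g r • nvec Y r) (hg.hasDerivAt.smul (hasDerivAt_nvec hτ)),
    inner_add_right, real_inner_smul_right, real_inner_smul_right, inner_rot90_right, nvec,
    inner_rot90_self, curv, nvec, real_inner_smul_left, real_inner_comm]
  field_simp
  ring

end PlaneCurve

section ClosedCurve

variable {Y : ℝ → E2}

lemma Function.Periodic.deriv {E : Type*} [NormedAddCommGroup E] [NormedSpace ℝ E] {f : ℝ → E}
    {c : ℝ} (hf : Periodic f c) : Periodic (deriv f) c := fun r => by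
  rw [← deriv_comp_add_const, funext hf]

lemma lenElem_periodic {c : ℝ} (hper : Periodic Y c) : Periodic (lenElem Y) c := fun r => by
  rw [lenElem, lenElem, hper.deriv r]

lemma clen_pos (hcont : Continuous (lenElem Y)) (hreg : ∀ r, deriv Y r ≠ 0) : 0 < clen Y :=
  intervalIntegral.intervalIntegral_pos_of_pos_on (hcont.intervalIntegrable 0 1)
    (fun r _ => lenElem_pos_iff.mpr (hreg r)) one_pos

lemma arcl_strictMono (hcont : Continuous (lenElem Y)) (hreg : ∀ r, deriv Y r ≠ 0) (p : ℝ) :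
    StrictMono (arcl Y p) := fun q₁ q₂ hq => by
  have hsub : arcl Y p q₂ - arcl Y p q₁ = ∫ r in q₁..q₂, lenElem Y r :=
    intervalIntegral.integral_interval_sub_left (hcont.intervalIntegrable _ _)
      (hcont.intervalIntegrable _ _)
  have hpos : 0 < ∫ r in q₁..q₂, lenElem Y r :=
    intervalIntegral.intervalIntegral_pos_of_pos_on (hcont.intervalIntegrable _ _)
      (fun r _ => lenElem_pos_iff.mpr (hreg r)) hq
  linarith

lemma arcl_add_int (hper : Periodic Y 1) (hcont : Continuous (lenElem Y)) (p : ℝ) (k : ℤ) :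
    arcl Y p (p + k) = k * clen Y := by
  have hper' := lenElem_periodic hper
  have := hper'.intervalIntegral_add_zsmul_eq k p fun _ _ => hcont.intervalIntegrable _ _
  simpa [hper'.intervalIntegral_add_eq p 0, arcl, clen] using this

lemma psi_ne_zero (hY : ContDiff ℝ 1 Y) (hper : Periodic Y 1) (hreg : ∀ r, deriv Y r ≠ 0)
    {p q : ℝ} (hd : extd Y p q ≠ 0) : psi Y p q ≠ 0 := by
  have hcont : Continuous (lenElem Y) := (hY.continuous_deriv le_rfl).norm
  have hL := clen_pos hcont hreg
  refine mul_ne_zero (div_ne_zero hL.ne' pi_ne_zero) fun hsin => hd ?_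
  obtain ⟨k, hk⟩ := sin_eq_zero_iff.mp hsin
  have hq : q = p + k := (arcl_strictMono hcont hreg p).injective <| by
    rw [arcl_add_int hper hcont]
    field_simp at hk
    linarith
  simpa [extd, hq, sub_eq_zero] using hper.int_mul k p

end ClosedCurve

section Flow

variable {X : ℝ → ℝ → E2} {h : ℝ → ℝ} {U : Set ℝ} {t : ℝ}

lemma contDiff_curveAt {n : WithTop ℕ∞} (hX : ContDiff ℝ n (uncurry X)) (s : ℝ) :
    ContDiff ℝ n (curveAt X s) :=
  hX.comp (contDiff_id.prodMk contDiff_const)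

lemma hasDerivAt_lenElem_curveAt (hX : ContDiff ℝ 2 (uncurry X)) {r s : ℝ}
    (hreg : deriv (curveAt X s) r ≠ 0) :
    HasDerivAt (fun s => lenElem (curveAt X s) r)
      ⟪tvec (curveAt X s) r, deriv (fun s => deriv (X · s) r) s⟫ s := by
  have hd : Differentiable ℝ (uncurry fun r s => deriv (X · s) r) :=
    (hX.uncurry_deriv_fst (m := 1) (by norm_num)).differentiable one_ne_zero
  exact ((hd (r, s)).comp s ((differentiableAt_const r).prodMk differentiableAt_id)).hasDerivAt.norm
    hreg

lemma hasDerivAt_arcl_curveAt (hX : ContDiff ℝ 2 (uncurry X)) (hU : IsOpen U)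
    (hreg : ∀ s ∈ U, ∀ r, deriv (curveAt X s) r ≠ 0) (ht : t ∈ U) (a b : ℝ) :
    HasDerivAt (fun s => arcl (curveAt X s) a b)
      (∫ r in a..b, ⟪tvec (curveAt X t) r, deriv (fun s => deriv (X · s) r) t⟫) t := by
  have hD := hX.uncurry_deriv_fst (m := 1) (by norm_num)
  have hD' : Continuous (uncurry fun r s => deriv (fun s => deriv (X · s) r) s) :=
    (hD.uncurry_deriv_snd (m := 0) (by norm_num)).continuous
  refine hasDerivAt_intervalIntegral_of_continuousOn hU ht
    (fun s _ => ((contDiff_curveAt hX s).continuous_deriv (by norm_num)).norm.continuousOn)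
    (fun r _ s hs => hasDerivAt_lenElem_curveAt hX (hreg s hs r)) ?_
  exact ((hD.continuous.norm.continuousOn.inv₀ fun z (hz : z ∈ [[a, b]] ×ˢ U) =>
    norm_ne_zero_iff.mpr (hreg z.2 hz.2 z.1)).smul hD.continuous.continuousOn).inner
      hD'.continuousOn

lemma FlowEq.inner_tvec_deriv_deriv (hX : ContDiff ℝ 3 (uncurry X)) (hflow : FlowEq X h U)
    (ht : t ∈ U) (hreg : ∀ r, deriv (curveAt X t) r ≠ 0) (r : ℝ) :
    ⟪tvec (curveAt X t) r, deriv (fun s => deriv (X · s) r) t⟫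
      = (h t - curv (curveAt X t) r) * curv (curveAt X t) r * lenElem (curveAt X t) r := by
  have hY := contDiff_curveAt hX t
  have hvel : (fun r => deriv (X r ·) t)
      = fun r => (h t - curv (curveAt X t) r) • nvec (curveAt X t) r :=
    funext fun r => (hflow r t ht).deriv
  rw [deriv_deriv_comm (hX.of_le (by norm_num)), hvel]
  exact inner_tvec_deriv_smul_nvec
    ((contDiff_tvec (n := 2) hY hreg).differentiable (by norm_num) r)
    (((contDiff_curv (n := 1) hY hreg).differentiable one_ne_zero r).const_sub _) (hreg r)

lemma FlowEq.hasDerivAt_arcl (hX : ContDiff ℝ 3 (uncurry X)) (hflow : FlowEq X h U)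
    (hU : IsOpen U) (hreg : ∀ s ∈ U, ∀ r, deriv (curveAt X s) r ≠ 0) (ht : t ∈ U) (a b : ℝ) :
    HasDerivAt (fun s => arcl (curveAt X s) a b)
      (h t * theta (curveAt X t) a b - sqCurvInt (curveAt X t) a b) t := by
  set Y := curveAt X t
  have hY := contDiff_curveAt hX t
  have hκ : Continuous (curv Y) := (contDiff_curv (n := 1) hY (hreg t ht)).continuous
  have hv : Continuous (lenElem Y) := (hY.continuous_deriv (by norm_num)).norm
  convert hasDerivAt_arcl_curveAt (hX.of_le (by norm_num)) hU hreg ht a b using 1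
  have hκv : IntervalIntegrable (fun r => h t * (curv Y r * lenElem Y r)) volume a b :=
    (continuous_const.mul (hκ.mul hv)).intervalIntegrable _ _
  have hκ2v : IntervalIntegrable (fun r => curv Y r ^ 2 * lenElem Y r) volume a b :=
    ((hκ.pow 2).mul hv).intervalIntegrable _ _
  rw [theta, sqCurvInt, ← intervalIntegral.integral_const_mul,
    ← intervalIntegral.integral_sub hκv hκ2v]
  refine intervalIntegral.integral_congr fun r _ => ?_
  rw [hflow.inner_tvec_deriv_deriv hX ht (hreg t ht) r]
  ring

lemma hasDerivAt_extd {p q : ℝ} {Vp Vq : E2} (hp : HasDerivAt (X p ·) Vp t)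
    (hq : HasDerivAt (X q ·) Vq t) (hd : extd (curveAt X t) p q ≠ 0) :
    HasDerivAt (fun s => extd (curveAt X s) p q) ⟪wvec (curveAt X t) p q, Vq - Vp⟫ t :=
  HasDerivAt.norm (f := fun s => X q s - X p s) (hq.sub hp) (norm_ne_zero_iff.mp hd)

lemma FlowEq.hasDerivAt_extd (hflow : FlowEq X h U) (ht : t ∈ U) {p q : ℝ}
    (hd : extd (curveAt X t) p q ≠ 0) :
    HasDerivAt (fun s => extd (curveAt X s) p q)
      (h t * ⟪wvec (curveAt X t) p q, nvec (curveAt X t) q - nvec (curveAt X t) p⟫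
        + ⟪wvec (curveAt X t) p q, kvec (curveAt X t) q - kvec (curveAt X t) p⟫) t := by
  convert _root_.hasDerivAt_extd (hflow p t ht) (hflow q t ht) hd using 1
  rw [kvec, kvec, ← real_inner_smul_right, ← inner_add_right]
  congr 1
  module

end Flow

theorem evolution_of_ratio_general
    (T : ℝ) (X : ℝ → ℝ → E2) (h : ℝ → ℝ)
    (hsm : SmoothFlow X)
    (hper : ∀ t, Function.Periodic (curveAt X t) 1)
    (hreg : ∀ t ∈ Set.Ioo 0 T, ∀ p, deriv (curveAt X t) p ≠ 0)
    (htot : ∀ t ∈ Set.Ioo 0 T, theta (curveAt X t) 0 1 = 2 * π)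
    (hflow : FlowEq X h (Set.Ioo 0 T))
    (p q : ℝ) (t : ℝ) (ht : t ∈ Set.Ioo 0 T)
    (hd : extd (curveAt X t) p q ≠ 0) :
    HasDerivAt (fun s : ℝ => extd (curveAt X s) p q / psi (curveAt X s) p q)
      ((psi (curveAt X t) p q)⁻¹ *
          (h t * (inner ℝ (wvec (curveAt X t) p q) (nvec (curveAt X t) q - nvec (curveAt X t) p) : ℝ)
            + (inner ℝ (wvec (curveAt X t) p q) (kvec (curveAt X t) q - kvec (curveAt X t) p) : ℝ))
        - extd (curveAt X t) p q / (psi (curveAt X t) p q) ^ 2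
            * Real.cos (π * arcl (curveAt X t) p q / clen (curveAt X t))
            * (h t * theta (curveAt X t) p q - sqCurvInt (curveAt X t) p q)
        + extd (curveAt X t) p q / (π * (psi (curveAt X t) p q) ^ 2)
            * (sqCurvInt (curveAt X t) 0 1 - 2 * π * h t)
            * (Real.sin (π * arcl (curveAt X t) p q / clen (curveAt X t))
              - (π * arcl (curveAt X t) p q / clen (curveAt X t))
                  * Real.cos (π * arcl (curveAt X t) p q / clen (curveAt X t)))) t := by
  have hX : ContDiff ℝ 3 (uncurry X) := hsm.of_le (by norm_cast)
  have hY := contDiff_curveAt hX t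
  have hL0 : clen (curveAt X t) ≠ 0 :=
    (clen_pos (hY.continuous_deriv (by norm_num)).norm (hreg t ht)).ne'
  have hψ0 := psi_ne_zero (hY.of_le (by norm_num)) (hper t) (hreg t ht) hd
  have hl := hflow.hasDerivAt_arcl hX isOpen_Ioo hreg ht p q
  have hL := hflow.hasDerivAt_arcl hX isOpen_Ioo hreg ht 0 1
  rw [htot t ht] at hL
  have hψ := (hL.div_const π).mul ((hl.const_mul π).div hL hL0).sin
  refine ((hflow.hasDerivAt_extd ht hd).div hψ hψ0).congr_deriv ?_
  have hsin := right_ne_zero_of_mul hψ0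
  simp only [psi, clen, Pi.mul_apply, Pi.div_apply] at hsin hL0 ⊢
  field_simp
  ring

/-- **Evolution of the ratio `d/ψ`.**
Along the flow `∂X/∂t = (h(t) - κ)ν` through embedded closed curves of total curvature
`2π`, at every `(p,q,t)` with `d(p,q,t) ≠ 0`,
`∂/∂t (d/ψ) = (1/ψ)(h⟨w, ν_q - ν_p⟩ + ⟨w, κ⃗_q - κ⃗_p⟩)
  - (d/ψ²) cos(π l/L)(h ∫_p^q κ ds - ∫_p^q κ² ds)
  + (d/(π ψ²))(∫_Σ κ² ds - 2πh)(sin(π l/L) - (π l/L) cos(π l/L))`. -/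
theorem evolution_of_ratio
    (T : ℝ) (hT : 0 < T) (X : ℝ → ℝ → E2) (h : ℝ → ℝ)
    (hsm : SmoothFlow X)
    (hper : ∀ t, Function.Periodic (curveAt X t) 1)
    (hreg : ∀ t ∈ Set.Ioo 0 T, ∀ p, deriv (curveAt X t) p ≠ 0)
    (hemb : ∀ t ∈ Set.Ioo 0 T, IsEmbedded (curveAt X t))
    (htot : ∀ t ∈ Set.Ioo 0 T, theta (curveAt X t) 0 1 = 2 * π)
    (hh : ∀ t ∈ Set.Ioo 0 T, 0 ≤ h t)
    (hhsm : ContDiffOn ℝ (⊤ : ℕ∞) h (Set.Ioo 0 T))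
    (hflow : FlowEq X h (Set.Ioo 0 T))
    (p q : ℝ) (t : ℝ) (ht : t ∈ Set.Ioo 0 T)
    (hd : extd (curveAt X t) p q ≠ 0) :
    HasDerivAt (fun s : ℝ => extd (curveAt X s) p q / psi (curveAt X s) p q)
      ((psi (curveAt X t) p q)⁻¹ *
          (h t * (inner ℝ (wvec (curveAt X t) p q) (nvec (curveAt X t) q - nvec (curveAt X t) p) : ℝ)
            + (inner ℝ (wvec (curveAt X t) p q) (kvec (curveAt X t) q - kvec (curveAt X t) p) : ℝ))
        - extd (curveAt X t) p q / (psi (curveAt X t) p q) ^ 2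
            * Real.cos (π * arcl (curveAt X t) p q / clen (curveAt X t))
            * (h t * theta (curveAt X t) p q - sqCurvInt (curveAt X t) p q)
        + extd (curveAt X t) p q / (π * (psi (curveAt X t) p q) ^ 2)
            * (sqCurvInt (curveAt X t) 0 1 - 2 * π * h t)
            * (Real.sin (π * arcl (curveAt X t) p q / clen (curveAt X t))
              - (π * arcl (curveAt X t) p q / clen (curveAt X t))
                  * Real.cos (π * arcl (curveAt X t) p q / clen (curveAt X t)))) t :=
  evolution_of_ratio_general T X h hsm hper hreg htot hflow p q t ht hd
end
end
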